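/- (Theorem 7.3: the derivative of Z_N at a Gram point measures the gradient of the extremal point.) Let n ∈ ℕ, let g > 2π be a real number with θ(g) = π·n, let N ∈ ℕ and a = (a₁,…,a_N) ∈ ℝ^N. For k = 1,…,N set Pₖ := 2·(−1)^{n+1}·sin(θ(g) − log(k+1)·g)·log(g/(2π(k+1)²)) / (√(k+1)·(log(g/(2π)))²) (the k-th component of the gradient ∇gₙ(0) of the extended Gram point, as computed in Lemma 7.2). Then the derivative at t = g of the map t ↦ Z_N(t; a) equals (1/4)·(−1)^n·(log(g/(2π)))²·Σ_{k=1}^N aₖ·Pₖ. -/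

import Mathlib

/-- The Riemann–Siegel theta function (approximate form):
`θ(t) = (t/2)·log(t/(2π)) − t/2 − π/8`. -/
noncomputable def rsTheta (t : ℝ) : ℝ :=
  t / 2 * Real.log (t / (2 * Real.pi)) - t / 2 - Real.pi / 8

/-- The `N`-th section
`Z_N(t; a) = cos(θ(t)) + Σ_{k=1}^N (aₖ/√(k+1))·cos(θ(t) − log(k+1)·t)`,
with `a : Fin N → ℝ` and the coordinate `k : Fin N` playing the role of the
paper's index `k+1 = k.val + 2`. -/
noncomputable def sectionZ (N : ℕ) (t : ℝ) (a : Fin N → ℝ) : ℝ :=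
  Real.cos (rsTheta t) +
    ∑ k : Fin N, a k / Real.sqrt ((k : ℕ) + 2) *
      Real.cos (rsTheta t - Real.log ((k : ℕ) + 2) * t)

lemma hasDerivAt_rsTheta (t : ℝ) (ht : 0 < t) :
    HasDerivAt rsTheta (Real.log (t / (2 * Real.pi)) / 2) t := by
  have h2pi : (0 : ℝ) < 2 * Real.pi := by positivity
  have hinner : HasDerivAt (fun x : ℝ => x / (2 * Real.pi)) (1 / (2 * Real.pi)) t := by
    simpa using (hasDerivAt_id t).div_const (2 * Real.pi)
  have hlog : HasDerivAt (fun x : ℝ => Real.log (x / (2 * Real.pi))) (1 / t) t := by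
    have := (Real.hasDerivAt_log (by positivity : t / (2 * Real.pi) ≠ 0)).comp t hinner
    refine this.congr_deriv ?_
    rw [inv_div, div_mul_div_comm, mul_one, mul_comm t, ← div_div, div_self h2pi.ne']
  have h1 : HasDerivAt (fun x : ℝ => x / 2 * Real.log (x / (2 * Real.pi)))
      (1 / 2 * Real.log (t / (2 * Real.pi)) + t / 2 * (1 / t)) t :=
    ((hasDerivAt_id t).div_const 2).mul hlog
  have h2 : HasDerivAt rsTheta
      (1 / 2 * Real.log (t / (2 * Real.pi)) + t / 2 * (1 / t) - 1 / 2 - 0) t := by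
    exact ((h1.sub ((hasDerivAt_id t).div_const 2)).sub (hasDerivAt_const t (Real.pi / 8)))
  convert h2 using 1
  field_simp
  ring

/-- Theorem 7.3: the derivative of `Z_N(·; a)` at a Gram point `g` equals
`(1/4)·(−1)^n·(log(g/(2π)))²·Σ_{k=1}^N aₖ·Pₖ`, where
`Pₖ = 2·(−1)^{n+1}·sin(θ(g) − log(k+1)·g)·log(g/(2π(k+1)²))/(√(k+1)·(log(g/(2π)))²)`
is the `k`-th component of the gradient `∇gₙ(0)` of the extended Gram point. -/
theorem sectionZ_deriv_measures_gradient (n : ℕ) (g : ℝ)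
    (hg : 2 * Real.pi < g) (hGram : rsTheta g = Real.pi * n)
    (N : ℕ) (a : Fin N → ℝ) :
    deriv (fun t => sectionZ N t a) g =
      1 / 4 * (-1 : ℝ) ^ n * (Real.log (g / (2 * Real.pi))) ^ 2 *
        ∑ k : Fin N, a k *
          (2 * (-1 : ℝ) ^ (n + 1) *
            Real.sin (rsTheta g - Real.log ((k : ℕ) + 2) * g) *
            Real.log (g / (2 * Real.pi * ((k : ℕ) + 2) ^ 2)) /
            (Real.sqrt ((k : ℕ) + 2) * (Real.log (g / (2 * Real.pi))) ^ 2)) := by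
  have h2pi : (0 : ℝ) < 2 * Real.pi := by positivity
  have hgpos : 0 < g := h2pi.trans hg
  set L := Real.log (g / (2 * Real.pi)) with hLdef
  have hL : 0 < L := Real.log_pos (by rw [lt_div_iff₀ h2pi]; linarith)
  have hθ : HasDerivAt rsTheta (L / 2) g := hasDerivAt_rsTheta g hgpos
  have hsin0 : Real.sin (rsTheta g) = 0 := by
    rw [hGram, mul_comm]; exact Real.sin_nat_mul_pi n
  have hk : ∀ k : Fin N, HasDerivAt
      (fun t => a k / Real.sqrt ((k : ℕ) + 2) *
        Real.cos (rsTheta t - Real.log ((k : ℕ) + 2) * t))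
      (a k / Real.sqrt ((k : ℕ) + 2) *
        (-Real.sin (rsTheta g - Real.log ((k : ℕ) + 2) * g) *
          (L / 2 - Real.log ((k : ℕ) + 2)))) g := by
    intro k
    have hlin : HasDerivAt (fun t : ℝ => Real.log ((k : ℕ) + 2) * t)
        (Real.log ((k : ℕ) + 2)) g := by
      simpa using (hasDerivAt_id g).const_mul (Real.log ((k : ℕ) + 2))
    exact ((hθ.sub hlin).cos).const_mul _
  have hsum : HasDerivAt (fun t => sectionZ N t a)
      (-Real.sin (rsTheta g) * (L / 2) +
        ∑ k : Fin N, a k / Real.sqrt ((k : ℕ) + 2) *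
          (-Real.sin (rsTheta g - Real.log ((k : ℕ) + 2) * g) *
            (L / 2 - Real.log ((k : ℕ) + 2)))) g := by
    unfold sectionZ
    exact hθ.cos.add (HasDerivAt.fun_sum fun k _ => hk k)
  rw [hsum.deriv, hsin0]
  rw [Finset.mul_sum]
  simp only [neg_zero, zero_mul, zero_add]
  refine Finset.sum_congr rfl fun k _ => ?_
  have hk2 : (0 : ℝ) < (k : ℕ) + 2 := by positivity
  have hsq : (0 : ℝ) < Real.sqrt ((k : ℕ) + 2) := Real.sqrt_pos.mpr hk2
  have hlogid : Real.log (g / (2 * Real.pi * ((k : ℕ) + 2) ^ 2)) =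
      L - 2 * Real.log ((k : ℕ) + 2) := by
    rw [hLdef, show (2 * Real.pi * ((k : ℕ) + 2) ^ 2 : ℝ) =
      (2 * Real.pi) * (((k : ℕ) + 2) ^ 2) by ring, ← div_div]
    rw [Real.log_div (by positivity) (by positivity), Real.log_pow]
    push_cast; ring
  rw [hlogid]
  have hpow : ((-1 : ℝ)) ^ (n + 1) = -(-1 : ℝ) ^ n := by rw [pow_succ]; ring
  rw [hpow]
  have hne : ((-1 : ℝ)) ^ n ≠ 0 := by positivity
  field_simp
  ring_nf
  rw [show ((-1 : ℝ)) ^ (n * 2) = 1 by rw [mul_comm, pow_mul]; norm_num]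
  ring
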